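/- Let Q = ∏_k [a_k, b_k) be an infinite-dimensional rectangle with b_k − a_k > 0, inf_k (b_k − a_k) > 0, and Σ_k |b_k − a_k − 1| < ∞ (so that ∏_k (b_k−a_k) converges to a positive number L). Let h = (h_k) ∈ ℓ¹. Then for all sufficiently small t > 0, ∏_k (b_k − a_k − t|h_k|) converges, and L − ∏_k (b_k − a_k − t|h_k|) ≤ L · Σ_k t|h_k|/(b_k − a_k). -/

import Mathlib

/-!
Write `c_k = b_k - a_k` and `e_k = t|h_k| / c_k`, so that `c_k - t|h_k| = c_k (1 - e_k)`.
Once `t ∑|h_k| ≤ inf_k c_k` every `e_k` lies in `[0, 1]`, and the finite Weierstrass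
inequality `∏ (1 - e_k) ≥ 1 - ∑ e_k` passes to the limit of partial products, giving
`L (1 - ∑ e_k) ≤ ∏ (c_k - t|h_k|)`. Both products converge because `∑ |c_k - 1| < ∞`
and `∑ t|h_k| < ∞`.
-/

open Filter Topology Finset

theorem Finset.one_sub_sum_le_prod_one_sub {ι R : Type*} [CommRing R] [PartialOrder R]
    [IsOrderedRing R] (s : Finset ι) {e : ι → R} (he₀ : ∀ i ∈ s, 0 ≤ e i)
    (he₁ : ∀ i ∈ s, e i ≤ 1) : 1 - ∑ i ∈ s, e i ≤ ∏ i ∈ s, (1 - e i) := by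
  classical
  induction s using Finset.induction_on with
  | empty => simp
  | insert j s hj ih =>
    rw [prod_insert hj, sum_insert hj]
    have hej : 0 ≤ 1 - e j := sub_nonneg.2 (he₁ j (mem_insert_self j s))
    have hS : 0 ≤ ∑ i ∈ s, e i := sum_nonneg fun i hi => he₀ i (mem_insert_of_mem hi)
    have hej₀ : 0 ≤ e j := he₀ j (mem_insert_self j s)
    calc 1 - (e j + ∑ i ∈ s, e i)
        ≤ 1 - (e j + ∑ i ∈ s, e i) + e j * ∑ i ∈ s, e i :=
          le_add_of_nonneg_right (mul_nonneg hej₀ hS)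
      _ = (1 - e j) * (1 - ∑ i ∈ s, e i) := by ring
      _ ≤ (1 - e j) * ∏ i ∈ s, (1 - e i) :=
          mul_le_mul_of_nonneg_left
            (ih (fun i hi => he₀ i (mem_insert_of_mem hi))
              (fun i hi => he₁ i (mem_insert_of_mem hi))) hej

theorem tprod_mul_one_sub_tsum_le_tprod {ι : Type*} {c e : ι → ℝ} (hc : ∀ i, 0 ≤ c i)
    (he₀ : ∀ i, 0 ≤ e i) (he₁ : ∀ i, e i ≤ 1) (hcm : Multipliable c) (hes : Summable e)
    (hm : Multipliable fun i => c i * (1 - e i)) :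
    (∏' i, c i) * (1 - ∑' i, e i) ≤ ∏' i, c i * (1 - e i) := by
  refine le_of_tendsto_of_tendsto' (Tendsto.mul hcm.hasProd (tendsto_const_nhds.sub hes.hasSum))
    hm.hasProd fun s => ?_
  rw [prod_mul_distrib]
  exact mul_le_mul_of_nonneg_left
    (s.one_sub_sum_le_prod_one_sub (fun i _ => he₀ i) (fun i _ => he₁ i))
    (prod_nonneg fun i _ => hc i)

theorem Real.multipliable_of_summable_sub_one {ι : Type*} {f : ι → ℝ}
    (hf : Summable fun i => f i - 1) : Multipliable f := by
  simpa using Real.multipliable_one_add_of_summable hf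

theorem shifted_block_overlap_estimate_general (a b h : ℕ → ℝ)
    (hinf : ∃ ε > 0, ∀ k, ε ≤ b k - a k)
    (hsum : Summable fun k => |b k - a k - 1|)
    (hh : Summable fun k => |h k|) :
    ∃ t₀ > 0, ∀ t : ℝ, 0 < t → t < t₀ →
      Multipliable (fun k => b k - a k - t * |h k|) ∧
      (∏' k, (b k - a k)) - (∏' k, (b k - a k - t * |h k|))
        ≤ (∏' k, (b k - a k)) * ∑' k, t * |h k| / (b k - a k) := by
  obtain ⟨ε, hε, hεc⟩ := hinf
  have hc : ∀ k, 0 < b k - a k := fun k => hε.trans_le (hεc k)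
  refine ⟨ε / (∑' k, |h k| + 1), by positivity, fun t ht htε => ?_⟩
  have hshift : ∀ k, t * |h k| ≤ b k - a k := fun k => by
    have hhk : |h k| ≤ ∑' k, |h k| + 1 :=
      (hh.le_tsum k fun j _ => abs_nonneg (h j)).trans (le_add_of_nonneg_right zero_le_one)
    have : t * (∑' k, |h k| + 1) < ε := (lt_div_iff₀ (by positivity)).1 htε
    nlinarith [hεc k]
  have hfactor : ∀ k, b k - a k - t * |h k| = (b k - a k) * (1 - t * |h k| / (b k - a k)) :=
    fun k => by field_simp [(hc k).ne']
  have hm : Multipliable fun k => b k - a k - t * |h k| :=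
    Real.multipliable_of_summable_sub_one
      ((hsum.of_abs.sub (hh.mul_left t)).congr fun k => by ring)
  refine ⟨hm, ?_⟩
  have key := tprod_mul_one_sub_tsum_le_tprod (fun k => (hc k).le)
    (fun k => div_nonneg (by positivity) (hc k).le)
    (fun k => (div_le_one (hc k)).2 (hshift k))
    (Real.multipliable_of_summable_sub_one hsum.of_abs)
    ((hh.mul_left t).div_const ε |>.of_nonneg_of_le
      (fun k => div_nonneg (by positivity) (hc k).le)
      (fun k => div_le_div_of_nonneg_left (by positivity) hε (hεc k)))
    (by simpa only [← hfactor] using hm)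
  simp only [← hfactor] at key
  linear_combination key

/-- For an infinite-dimensional rectangle `Q = ∏_k [a_k, b_k)` with side lengths
bounded away from `0` and `Σ_k |b_k − a_k − 1| < ∞`, and `h ∈ ℓ¹`, for all
sufficiently small `t > 0` the product `∏_k (b_k − a_k − t|h_k|)` converges and
its deficit from `L = ∏_k (b_k − a_k)` is at most `L · Σ_k t|h_k|/(b_k − a_k)`. -/
theorem shifted_block_overlap_estimate (a b h : ℕ → ℝ)
    (hside : ∀ k, 0 < b k - a k) (hinf : ∃ ε > 0, ∀ k, ε ≤ b k - a k)
    (hsum : Summable fun k => |b k - a k - 1|)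
    (hh : Summable fun k => |h k|) :
    ∃ t₀ > 0, ∀ t : ℝ, 0 < t → t < t₀ →
      Multipliable (fun k => b k - a k - t * |h k|) ∧
      (∏' k, (b k - a k)) - (∏' k, (b k - a k - t * |h k|))
        ≤ (∏' k, (b k - a k)) * ∑' k, t * |h k| / (b k - a k) :=
  shifted_block_overlap_estimate_general a b h hinf hsum hh
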